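/- Let a ≠ 0 and 4a³ + 27b² ≠ 0, with A₂ = k[x,y]/(y² - x³ - ax - b) and ∂₂ = -2y·∂/∂x - (3x² + a)·∂/∂y. Then the cokernel of ∂₂ : A₂ → A₂ is a 2-dimensional k-vector space with basis given by the images of 1 and y². -/

import Mathlib

open MvPolynomial

open scoped Polynomial

/-!
Write `x, y` for the images of the variables in `A₂` and `f = x³ + ax + b`. Every element of
`A₂` is uniquely `g(x) + h(x) y`, and `∂ g = -2 g' y`, `∂ (h y) = -L h` with
`L h = 2 f h' + f' h`. As `g ↦ g'` is onto in characteristic zero, `g ↦ [g]` identifies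
`k[x] / L(k[x])` with the cokernel of `∂`. Since `h · L h = (f h²)'`, the operator `L` raises
degrees by exactly `deg f - 1 = 2`, so `1, x` is a basis of the cokernel; finally
`5 f - L x = 2a x + 3b` with `a ≠ 0` lets `[y²] = [f]` take the place of `[x]`.
-/

namespace Polynomial

section CommRing

variable {R : Type*} [CommRing R]

noncomputable def twistedDeriv (f : R[X]) : R[X] →ₗ[R] R[X] where
  toFun g := 2 * f * derivative g + derivative f * g
  map_add' g h := by simp only [map_add]; ring
  map_smul' c g := by rw [map_smul]; simp only [RingHom.id_apply, smul_eq_C_mul]; ring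

theorem twistedDeriv_apply (f g : R[X]) :
    twistedDeriv f g = 2 * f * derivative g + derivative f * g := rfl

theorem mul_twistedDeriv (f g : R[X]) : g * twistedDeriv f g = derivative (f * g ^ 2) := by
  rw [twistedDeriv_apply, derivative_mul, derivative_sq, map_ofNat]; ring

theorem twistedDeriv_cubic_X (a b : R) :
    twistedDeriv (X ^ 3 + C a * X + C b) X
      = (5 : R) • (X ^ 3 + C a * X + C b) - ((2 * a) • X + (3 * b) • 1) := by
  simp only [twistedDeriv_apply, smul_eq_C_mul, derivative_add, derivative_X_pow,
    derivative_C_mul_X, derivative_C, derivative_X, map_mul, map_ofNat, Nat.cast_ofNat]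
  ring

end CommRing

variable {K : Type*} [Field K] [CharZero K] {f g : K[X]}

theorem derivative_surjective : Function.Surjective (derivative : K[X] → K[X]) := by
  intro p
  induction p using Polynomial.induction_on' with
  | add p q hp hq =>
    obtain ⟨P, rfl⟩ := hp
    obtain ⟨Q, rfl⟩ := hq
    exact ⟨P + Q, map_add _ _ _⟩
  | monomial n c =>
    refine ⟨monomial (n + 1) (c / (n + 1)), ?_⟩
    rw [derivative_monomial, Nat.add_sub_cancel]
    push_cast
    field_simp

theorem twistedDeriv_ne_zero (hf : 0 < f.natDegree) (hg : g ≠ 0) : twistedDeriv f g ≠ 0 := by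
  have h : derivative (f * g ^ 2) ≠ 0 := by
    rw [derivative_ne_zero, natDegree_mul (ne_zero_of_natDegree_gt hf) (pow_ne_zero 2 hg)]
    omega
  rw [← mul_twistedDeriv] at h
  exact right_ne_zero_of_mul h

theorem natDegree_twistedDeriv (hf : 0 < f.natDegree) (hg : g ≠ 0) :
    (twistedDeriv f g).natDegree = g.natDegree + f.natDegree - 1 := by
  have h := congrArg natDegree (mul_twistedDeriv f g)
  rw [natDegree_mul hg (twistedDeriv_ne_zero hf hg), natDegree_derivative,
    natDegree_mul (ne_zero_of_natDegree_gt hf) (pow_ne_zero 2 hg), natDegree_pow] at h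
  omega

theorem isCompl_range_twistedDeriv_degreeLT (hf : 0 < f.natDegree) :
    IsCompl (LinearMap.range (twistedDeriv f)) (degreeLT K (f.natDegree - 1)) := by
  constructor
  · rw [Submodule.disjoint_def]
    rintro _ ⟨g, rfl⟩ hdeg
    by_contra hne
    have hg : g ≠ 0 := by rintro rfl; exact hne (map_zero _)
    rw [mem_degreeLT, degree_eq_natDegree hne, natDegree_twistedDeriv hf hg] at hdeg
    norm_cast at hdeg
    omega
  · rw [codisjoint_iff, eq_top_iff]
    intro p _
    induction p using degree_lt_wf.induction with
    | _ p ih =>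
    by_cases hp : p.degree < (f.natDegree - 1 : ℕ)
    · exact Submodule.mem_sup_right (mem_degreeLT.mpr hp)
    have hp0 : p ≠ 0 := by rintro rfl; simp at hp
    rw [not_lt, degree_eq_natDegree hp0, Nat.cast_le] at hp
    -- `q` has the degree of `p`, so a multiple of it cancels the leading term of `p`
    set q := twistedDeriv f (X ^ (p.natDegree + 1 - f.natDegree))
    have hq0 : q ≠ 0 := twistedDeriv_ne_zero hf (pow_ne_zero _ X_ne_zero)
    have hq : q.natDegree = p.natDegree := by
      rw [natDegree_twistedDeriv hf (pow_ne_zero _ X_ne_zero), natDegree_X_pow]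
      omega
    set c := p.leadingCoeff / q.leadingCoeff
    have hc : c ≠ 0 := div_ne_zero (leadingCoeff_ne_zero.mpr hp0) (leadingCoeff_ne_zero.mpr hq0)
    have hlt : (p - C c * q).degree < p.degree := by
      apply degree_sub_lt_left _ hp0
      · rw [leadingCoeff_mul, leadingCoeff_C, div_mul_cancel₀ _ (leadingCoeff_ne_zero.mpr hq0)]
      · rw [degree_C_mul hc, degree_eq_natDegree hp0, degree_eq_natDegree hq0, hq]
    have hcq : C c * q ∈ LinearMap.range (twistedDeriv f) :=
      ⟨c • X ^ (p.natDegree + 1 - f.natDegree), by rw [map_smul, smul_eq_C_mul]⟩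
    simpa using Submodule.add_mem _ (ih _ hlt Submodule.mem_top) (Submodule.mem_sup_left hcq)

section Cubic

variable {a b : K}

theorem isCompl_range_twistedDeriv_cubic :
    IsCompl (LinearMap.range (twistedDeriv (X ^ 3 + C a * X + C b))) (degreeLT K 2) := by
  have hf : (X ^ 3 + C a * X + C b).natDegree = 3 := by compute_degree!
  have h := isCompl_range_twistedDeriv_degreeLT (f := X ^ 3 + C a * X + C b) (by rw [hf]; norm_num)
  rwa [hf] at h

theorem exists_sub_mem_range_twistedDeriv_cubic (ha : a ≠ 0) (p : K[X]) :
    ∃ s t : K, p - (s • 1 + t • (X ^ 3 + C a * X + C b))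
      ∈ LinearMap.range (twistedDeriv (X ^ 3 + C a * X + C b)) := by
  have hp : p ∈ LinearMap.range (twistedDeriv (X ^ 3 + C a * X + C b)) ⊔ degreeLT K 2 :=
    (isCompl_range_twistedDeriv_cubic (a := a) (b := b)).sup_eq_top ▸ Submodule.mem_top
  obtain ⟨q, hq, r, hr, rfl⟩ := Submodule.mem_sup.mp hp
  obtain ⟨r₀, r₁, rfl⟩ : ∃ r₀ r₁ : K, r = r₁ • X + r₀ • 1 := by
    refine ⟨r.coeff 0, r.coeff 1, ?_⟩
    rw [smul_eq_C_mul, smul_eq_C_mul, mul_one]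
    exact eq_X_add_C_of_degree_le_one (Order.le_of_lt_succ (mem_degreeLT.mp hr))
  refine ⟨r₀ - 3 * b / (2 * a) * r₁, 5 / (2 * a) * r₁, ?_⟩
  convert add_mem hq (Submodule.smul_mem _ (-r₁ / (2 * a)) (LinearMap.mem_range_self _ X)) using 1
  rw [twistedDeriv_cubic_X]
  match_scalars <;> field_simp
  ring

theorem eq_zero_of_smul_add_smul_mem_range_twistedDeriv_cubic (ha : a ≠ 0) {s t : K}
    (h : s • 1 + t • (X ^ 3 + C a * X + C b)
      ∈ LinearMap.range (twistedDeriv (X ^ 3 + C a * X + C b))) : s = 0 ∧ t = 0 := by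
  set r : K[X] := (2 * a * t / 5) • X + (s + 3 * b * t / 5) • 1
  have hr : r ∈ LinearMap.range (twistedDeriv (X ^ 3 + C a * X + C b)) := by
    convert sub_mem h (Submodule.smul_mem _ (t / 5) (LinearMap.mem_range_self _ X)) using 1
    rw [twistedDeriv_cubic_X]
    match_scalars <;> ring
  have hdeg : r ∈ degreeLT K 2 := by
    rw [mem_degreeLT]
    simp only [r, smul_eq_C_mul, mul_one]
    exact degree_linear_le.trans_lt (by decide)
  have hr0 := Submodule.disjoint_def.mp isCompl_range_twistedDeriv_cubic.disjoint r hr hdeg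
  have h1 := congrArg (coeff · 1) hr0
  have h0 := congrArg (coeff · 0) hr0
  simp only [r, coeff_add, coeff_smul, coeff_X_one, coeff_X_zero, coeff_one, smul_eq_mul,
    coeff_zero] at h1 h0
  have ht : t = 0 := by simpa [ha] using h1
  exact ⟨by simpa [ht] using h0, ht⟩

end Cubic

end Polynomial

theorem exists_basis_fin_two_of_surjective {K V M : Type*} [Ring K] [AddCommGroup V] [Module K V]
    [AddCommGroup M] [Module K M] {φ : V →ₗ[K] M} (hφ : Function.Surjective φ)
    {e₀ e₁ : V}
    (hspan : ∀ v, ∃ s t : K, v - (s • e₀ + t • e₁) ∈ LinearMap.ker φ)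
    (hind : ∀ s t : K, s • e₀ + t • e₁ ∈ LinearMap.ker φ → s = 0 ∧ t = 0) :
    ∃ b : Module.Basis (Fin 2) K M, b 0 = φ e₀ ∧ b 1 = φ e₁ := by
  have hli : LinearIndependent K ![φ e₀, φ e₁] := by
    rw [LinearIndependent.pair_iff]
    intro s t hst
    exact hind s t (by simpa using hst)
  have hsp : ⊤ ≤ Submodule.span K (Set.range ![φ e₀, φ e₁]) := by
    rintro m -
    obtain ⟨v, rfl⟩ := hφ m
    obtain ⟨s, t, hv⟩ := hspan v
    rw [LinearMap.mem_ker, map_sub, sub_eq_zero] at hv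
    rw [hv, map_add, map_smul, map_smul]
    exact add_mem (Submodule.smul_mem _ _ (Submodule.subset_span ⟨0, rfl⟩))
      (Submodule.smul_mem _ _ (Submodule.subset_span ⟨1, rfl⟩))
  exact ⟨Module.Basis.mk hli hsp, by simp, by simp⟩

section Presentation

variable {k : Type*} [Field k] {A : Type*} [CommRing A] [Algebra k A]
  {π : MvPolynomial (Fin 2) k →ₐ[k] A} {f : k[X]} {D : Derivation k A A}

theorem exists_eq_aeval_add_aeval_mul (hπ : Function.Surjective π)
    (hy2 : π (X 1) ^ 2 = Polynomial.aeval (π (X 0)) f) (z : A) :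
    ∃ g h : k[X],
      z = Polynomial.aeval (π (X 0)) g + Polynomial.aeval (π (X 0)) h * π (X 1) := by
  obtain ⟨p, rfl⟩ := hπ z
  induction p using MvPolynomial.induction_on with
  | C c => exact ⟨Polynomial.C c, 0, by simp⟩
  | add p q hp hq =>
    obtain ⟨g₁, h₁, hp⟩ := hp
    obtain ⟨g₂, h₂, hq⟩ := hq
    exact ⟨g₁ + g₂, h₁ + h₂, by rw [map_add, hp, hq]; simp only [map_add]; ring⟩
  | mul_X p i hp =>
    obtain ⟨g, h, hp⟩ := hp
    rw [map_mul, hp]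
    obtain rfl | rfl := Fin.exists_fin_two.mp ⟨i, rfl⟩
    · refine ⟨g * Polynomial.X, h * Polynomial.X, ?_⟩
      simp only [map_mul, Polynomial.aeval_X]
      ring
    · refine ⟨h * f, g, ?_⟩
      simp only [map_mul]
      linear_combination Polynomial.aeval (π (X 0)) h * hy2

theorem eq_zero_of_aeval_add_aeval_mul_eq_zero
    (hker : RingHom.ker π ≤ Ideal.span {X 1 ^ 2 - Polynomial.aeval (X 0) f}) {u v : k[X]}
    (h : Polynomial.aeval (π (X 0)) u + Polynomial.aeval (π (X 0)) v * π (X 1) = 0) :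
    u = 0 ∧ v = 0 := by
  -- in `k[x][Y]` the relation becomes `Y² - f`, which is monic of degree 2 in `Y`
  let ψ : MvPolynomial (Fin 2) k →ₐ[k] k[X][X] :=
    MvPolynomial.aeval ![Polynomial.C Polynomial.X, Polynomial.X]
  have hψ (p : k[X]) : ψ (Polynomial.aeval (X 0) p) = Polynomial.C p := by
    rw [← Polynomial.aeval_algHom_apply, show ψ (X 0) = Polynomial.C Polynomial.X by simp [ψ],
      ← Polynomial.algebraMap_eq, Polynomial.aeval_algebraMap_apply,
      Polynomial.aeval_X_left_apply]
  have hmem : Polynomial.aeval (X 0) u + Polynomial.aeval (X 0) v * X 1 ∈ RingHom.ker π := by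
    simpa [Polynomial.aeval_algHom_apply] using h
  obtain ⟨w, hw⟩ := Ideal.mem_span_singleton'.mp (hker hmem)
  have hdvd : Polynomial.X ^ 2 - Polynomial.C f
      ∣ Polynomial.C v * Polynomial.X + Polynomial.C u := by
    refine ⟨ψ w, ?_⟩
    apply_fun ψ at hw
    simp only [map_mul, map_sub, map_add, map_pow, hψ, show ψ (X 1) = Polynomial.X by simp [ψ]]
      at hw
    linear_combination -hw
  have h0 := Polynomial.eq_zero_of_dvd_of_degree_lt hdvd <| Polynomial.degree_linear_le.trans_lt
    (by rw [Polynomial.degree_X_pow_sub_C two_pos]; decide)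
  exact ⟨by simpa using congrArg (Polynomial.coeff · 0) h0,
    by simpa using congrArg (Polynomial.coeff · 1) h0⟩

theorem derivation_aeval_mul (hx : D (π (X 0)) = -2 * π (X 1))
    (hy : D (π (X 1)) = -Polynomial.aeval (π (X 0)) (Polynomial.derivative f))
    (hy2 : π (X 1) ^ 2 = Polynomial.aeval (π (X 0)) f) (h : k[X]) :
    D (Polynomial.aeval (π (X 0)) h * π (X 1))
      = -Polynomial.aeval (π (X 0)) (f.twistedDeriv h) := by
  rw [Derivation.leibniz, Derivation.map_aeval, hx, hy, Polynomial.twistedDeriv_apply]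
  simp only [smul_eq_mul, map_add, map_mul, map_ofNat]
  linear_combination (-2 * Polynomial.aeval (π (X 0)) (Polynomial.derivative h)) * hy2

theorem aeval_mul_mem_range_derivation [CharZero k] (hx : D (π (X 0)) = -2 * π (X 1))
    (h : k[X]) : Polynomial.aeval (π (X 0)) h * π (X 1) ∈ LinearMap.range D.toLinearMap := by
  obtain ⟨H, rfl⟩ := Polynomial.derivative_surjective h
  refine ⟨(-1 / 2 : k) • Polynomial.aeval (π (X 0)) H, ?_⟩
  rw [Derivation.coeFn_coe, Derivation.map_smul, Derivation.map_aeval, hx, smul_eq_mul,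
    show (-2 : A) * π (X 1) = (-2 : k) • π (X 1) by rw [Algebra.smul_def, map_neg, map_ofNat],
    mul_smul_comm, smul_smul]
  norm_num

theorem mkQ_comp_aeval_surjective [CharZero k] (hπ : Function.Surjective π)
    (hy2 : π (X 1) ^ 2 = Polynomial.aeval (π (X 0)) f) (hx : D (π (X 0)) = -2 * π (X 1)) :
    Function.Surjective
      ((LinearMap.range D.toLinearMap).mkQ ∘ₗ (Polynomial.aeval (π (X 0))).toLinearMap) := by
  intro q
  obtain ⟨z, rfl⟩ := Submodule.mkQ_surjective _ q
  obtain ⟨g, h, rfl⟩ := exists_eq_aeval_add_aeval_mul hπ hy2 z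
  refine ⟨g, ?_⟩
  simp only [LinearMap.coe_comp, Function.comp_apply, AlgHom.toLinearMap_apply,
    Submodule.mkQ_apply, Submodule.Quotient.eq, sub_add_cancel_left]
  exact neg_mem (aeval_mul_mem_range_derivation hx h)

theorem ker_mkQ_comp_aeval (hπ : Function.Surjective π)
    (hker : RingHom.ker π ≤ Ideal.span {X 1 ^ 2 - Polynomial.aeval (X 0) f})
    (hx : D (π (X 0)) = -2 * π (X 1))
    (hy : D (π (X 1)) = -Polynomial.aeval (π (X 0)) (Polynomial.derivative f))
    (hy2 : π (X 1) ^ 2 = Polynomial.aeval (π (X 0)) f) :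
    LinearMap.ker
        ((LinearMap.range D.toLinearMap).mkQ ∘ₗ (Polynomial.aeval (π (X 0))).toLinearMap)
      = LinearMap.range f.twistedDeriv := by
  ext u
  simp only [LinearMap.mem_ker, LinearMap.coe_comp, Function.comp_apply,
    AlgHom.toLinearMap_apply, Submodule.mkQ_apply, Submodule.Quotient.mk_eq_zero]
  constructor
  · rintro ⟨z, hz⟩
    obtain ⟨g, h, rfl⟩ := exists_eq_aeval_add_aeval_mul hπ hy2 z
    rw [Derivation.coeFn_coe, map_add, Derivation.map_aeval, hx,
      derivation_aeval_mul hx hy hy2] at hz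
    have hcoord := eq_zero_of_aeval_add_aeval_mul_eq_zero hker
      (u := u + f.twistedDeriv h) (v := 2 * Polynomial.derivative g)
      (by simp only [map_add, map_mul, map_ofNat, smul_eq_mul] at hz ⊢
          linear_combination -hz)
    exact ⟨-h, by rw [map_neg]; exact (eq_neg_of_add_eq_zero_left hcoord.1).symm⟩
  · rintro ⟨h, rfl⟩
    exact ⟨-(Polynomial.aeval (π (X 0)) h * π (X 1)),
      by rw [map_neg, Derivation.coeFn_coe, derivation_aeval_mul hx hy hy2, neg_neg]⟩

end Presentation

theorem coker_del2_a_ne_zero_general (k : Type*) [Field k] [CharZero k] (a b : k)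
    (ha : a ≠ 0)
    (A₂ : Type*) [CommRing A₂] [Algebra k A₂]
    (π : MvPolynomial (Fin 2) k →ₐ[k] A₂)
    (hπ : Function.Surjective π)
    (hker : RingHom.ker π.toRingHom =
      Ideal.span {(X 1 ^ 2 - X 0 ^ 3 - C a * X 0 - C b : MvPolynomial (Fin 2) k)})
    (D : Derivation k A₂ A₂)
    (hx : D (π (X 0)) = π (-2 * X 1))
    (hy : D (π (X 1)) = π (-(3 * X 0 ^ 2 + C a))) :
    ∃ bas : Module.Basis (Fin 2) k (A₂ ⧸ LinearMap.range D.toLinearMap),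
      bas 0 = Submodule.Quotient.mk (π 1) ∧
      bas 1 = Submodule.Quotient.mk (π (X 1 ^ 2)) := by
  set f : k[X] := Polynomial.X ^ 3 + Polynomial.C a * Polynomial.X + Polynomial.C b
  have hF : (X 1 ^ 2 - X 0 ^ 3 - C a * X 0 - C b : MvPolynomial (Fin 2) k)
      = X 1 ^ 2 - Polynomial.aeval (X 0) f := by
    simp [f]
    ring
  rw [hF] at hker
  have hy2 : π (X 1) ^ 2 = Polynomial.aeval (π (X 0)) f := by
    have hmem := hker ▸ Ideal.mem_span_singleton_self (X 1 ^ 2 - Polynomial.aeval (X 0) f)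
    rwa [RingHom.mem_ker, AlgHom.toRingHom_eq_coe, RingHom.coe_coe, map_sub, sub_eq_zero, map_pow,
      ← Polynomial.aeval_algHom_apply] at hmem
  have hx' : D (π (X 0)) = -2 * π (X 1) := by rw [hx, map_mul, map_neg, map_ofNat]
  have hy' : D (π (X 1)) = -Polynomial.aeval (π (X 0)) (Polynomial.derivative f) := by
    rw [hy, map_neg, map_add, map_mul, map_ofNat, map_pow, MvPolynomial.algHom_C]
    simp only [f, Polynomial.derivative_X_pow, Polynomial.derivative_C_mul_X,
      Polynomial.derivative_C, add_zero, map_add, map_mul, Polynomial.aeval_C,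
      Polynomial.aeval_X_pow, Nat.cast_ofNat, map_ofNat]
  have hkerφ := ker_mkQ_comp_aeval hπ hker.le hx' hy' hy2
  obtain ⟨bas, h0, h1⟩ := exists_basis_fin_two_of_surjective
    (mkQ_comp_aeval_surjective hπ hy2 hx') (e₀ := 1) (e₁ := f)
    (hkerφ ▸ Polynomial.exists_sub_mem_range_twistedDeriv_cubic ha)
    (hkerφ ▸ fun _ _ => Polynomial.eq_zero_of_smul_add_smul_mem_range_twistedDeriv_cubic ha)
  exact ⟨bas, by simp [h0], by simp [h1, hy2]⟩

/-- For `a ≠ 0`, `4a³ + 27b² ≠ 0`, `A₂ = k[x,y]/(y² - x³ - ax - b)` with the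
derivation `∂₂` given by `∂₂(x) = -2y`, `∂₂(y) = -(3x² + a)`, the cokernel of
`∂₂ : A₂ → A₂` is a 2-dimensional `k`-vector space with basis the images of `1` and `y²`. -/
theorem coker_del2_a_ne_zero (k : Type*) [Field k] [IsAlgClosed k] [CharZero k] (a b : k)
    (ha : a ≠ 0) (hΔ : 4 * a ^ 3 + 27 * b ^ 2 ≠ 0)
    (A₂ : Type*) [CommRing A₂] [Algebra k A₂]
    (π : MvPolynomial (Fin 2) k →ₐ[k] A₂)
    (hπ : Function.Surjective π)
    (hker : RingHom.ker π.toRingHom =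
      Ideal.span {(X 1 ^ 2 - X 0 ^ 3 - C a * X 0 - C b : MvPolynomial (Fin 2) k)})
    (D : Derivation k A₂ A₂)
    (hx : D (π (X 0)) = π (-2 * X 1))
    (hy : D (π (X 1)) = π (-(3 * X 0 ^ 2 + C a))) :
    ∃ bas : Module.Basis (Fin 2) k (A₂ ⧸ LinearMap.range D.toLinearMap),
      bas 0 = Submodule.Quotient.mk (π 1) ∧
      bas 1 = Submodule.Quotient.mk (π (X 1 ^ 2)) :=
  coker_del2_a_ne_zero_general k a b ha A₂ π hπ hker D hx hy
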